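/- Let u : ℝ → ℂ be continuously differentiable with compact support. Then for every R > 0, ∫_R^∞ |u(r)|⁴ r² dr ≤ 2 R^{-2} ‖r·u'‖_{L²(R,∞)} · ‖r·u‖_{L²(R,∞)}³. -/

import Mathlib

/-!
For `r ≥ R > 0`, write `r² |u r|² = -∫_r^∞ (s² |u s|²)' ds`. The derivative is
`2 s |u|² + 2 s² ⟪u, u'⟫`; dropping the nonnegative first term and applying Cauchy–Schwarz gives
the pointwise bound `r² |u r|² ≤ 2 ‖r u'‖ ‖r u‖` on `(R, ∞)`. Hence, there,
`|u|⁴ r² ≤ 2 ‖r u'‖ ‖r u‖ |u|² ≤ 2 R⁻² ‖r u'‖ ‖r u‖ r² |u|²`, and integrating gives the claim.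
-/

open MeasureTheory Set

theorem integral_mul_le_sqrt_integral_sq_mul_sqrt_integral_sq {α : Type*} [MeasurableSpace α]
    {μ : Measure α} {f g : α → ℝ} (hf : MemLp f 2 μ) (hg : MemLp g 2 μ) :
    ∫ x, f x * g x ∂μ ≤ √(∫ x, f x ^ 2 ∂μ) * √(∫ x, g x ^ 2 ∂μ) := by
  have h2 : ENNReal.ofReal 2 = 2 := by norm_num
  have holder := integral_mul_norm_le_Lp_mul_Lq (μ := μ) Real.HolderConjugate.two_two
    (h2 ▸ hf) (h2 ▸ hg)
  simp only [Real.rpow_two, Real.norm_eq_abs, sq_abs, ← Real.sqrt_eq_rpow] at holder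
  calc ∫ x, f x * g x ∂μ ≤ ‖∫ x, f x * g x ∂μ‖ := Real.le_norm_self _
    _ ≤ ∫ x, |f x| * |g x| ∂μ := by
        simpa only [norm_mul, Real.norm_eq_abs] using
          norm_integral_le_integral_norm (fun x => f x * g x)
    _ ≤ _ := holder

theorem HasCompactSupport.eq_neg_integral_Ioi_deriv {F : ℝ → ℝ} (hF : ContDiff ℝ 1 F)
    (hsupp : HasCompactSupport F) (r : ℝ) : F r = -∫ s in Ioi r, deriv F s := by
  have hint : Integrable (deriv F) :=
    (hF.continuous_deriv le_rfl).integrable_of_hasCompactSupport hsupp.deriv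
  rw [integral_Ioi_of_hasDerivAt_of_tendsto'
    (fun x _ => (hF.differentiable one_ne_zero x).hasDerivAt) hint.integrableOn
    (hsupp.is_zero_at_infty.mono_left atTop_le_cocompact)]
  ring

section

variable {E : Type*} [NormedAddCommGroup E]

theorem memLp_mul_norm_of_hasCompactSupport {v : ℝ → E} (hv : Continuous v)
    (hsupp : HasCompactSupport v) (p : ENNReal) : MemLp (fun s => s * ‖v s‖) p :=
  Continuous.memLp_of_hasCompactSupport (by fun_prop) (hsupp.mono fun s hs h => hs (by simp [h]))

theorem setIntegral_Ioi_sq_mul_norm_sq_le_of_le {v : ℝ → E} (hv : Continuous v)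
    (hsupp : HasCompactSupport v) {R r : ℝ} (hr : R ≤ r) :
    ∫ s in Ioi r, s ^ 2 * ‖v s‖ ^ 2 ≤ ∫ s in Ioi R, s ^ 2 * ‖v s‖ ^ 2 := by
  simp_rw [← mul_pow]
  exact setIntegral_mono_set
    (memLp_mul_norm_of_hasCompactSupport hv hsupp 2).integrable_sq.integrableOn
    (.of_forall fun s => sq_nonneg _) (Ioi_subset_Ioi hr).eventuallyLE

variable [InnerProductSpace ℝ E] {u : ℝ → E}

theorem sq_mul_norm_sq_le_two_integral_Ioi (hu : ContDiff ℝ 1 u) (hsupp : HasCompactSupport u)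
    {r : ℝ} (hr : 0 ≤ r) :
    r ^ 2 * ‖u r‖ ^ 2 ≤ 2 * ∫ s in Ioi r, (s * ‖u s‖) * (s * ‖deriv u s‖) := by
  have hcu := hu.continuous
  have hcu' := hu.continuous_deriv le_rfl
  let F : ℝ → ℝ := fun s => s ^ 2 * ‖u s‖ ^ 2
  have hF : ContDiff ℝ 1 F := (contDiff_id.pow 2).mul (hu.norm_sq ℝ)
  have hF_supp : HasCompactSupport F := hsupp.mono fun s hs h => hs (by simp [F, h])
  have hF_deriv (s : ℝ) :
      deriv F s = 2 * s * ‖u s‖ ^ 2 + s ^ 2 * (2 * inner ℝ (u s) (deriv u s)) := by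
    refine ((hasDerivAt_pow 2 s).mul
      ((hu.differentiable one_ne_zero s).hasDerivAt.norm_sq)).deriv.trans ?_
    norm_num
  have hint : Integrable fun s => (s * ‖u s‖) * (s * ‖deriv u s‖) :=
    Continuous.integrable_of_hasCompactSupport (by fun_prop)
      (hsupp.mono fun s hs h => hs (by simp [h]))
  rw [show r ^ 2 * ‖u r‖ ^ 2 = F r from rfl, hF_supp.eq_neg_integral_Ioi_deriv hF r,
    ← integral_neg, ← integral_const_mul]
  refine setIntegral_mono_on ?_ (hint.const_mul 2).integrableOn measurableSet_Ioi fun s hs => ?_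
  · exact ((hF.continuous_deriv le_rfl).integrable_of_hasCompactSupport
      hF_supp.deriv).neg.integrableOn
  · have hs : 0 ≤ s := hr.trans hs.le
    have := neg_le_of_abs_le (abs_real_inner_le_norm (u s) (deriv u s))
    rw [hF_deriv]
    nlinarith [mul_nonneg hs (sq_nonneg ‖u s‖), sq_nonneg s]

theorem sq_mul_norm_sq_le_two_mul_sqrt_mul_sqrt (hu : ContDiff ℝ 1 u)
    (hsupp : HasCompactSupport u) {R r : ℝ} (hR : 0 ≤ R) (hr : R ≤ r) :
    r ^ 2 * ‖u r‖ ^ 2 ≤ 2 * √(∫ s in Ioi R, s ^ 2 * ‖deriv u s‖ ^ 2) *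
      √(∫ s in Ioi R, s ^ 2 * ‖u s‖ ^ 2) := by
  have hcu := hu.continuous
  have hcu' := hu.continuous_deriv le_rfl
  have hCS := integral_mul_le_sqrt_integral_sq_mul_sqrt_integral_sq
    ((memLp_mul_norm_of_hasCompactSupport hcu hsupp 2).restrict (Ioi r))
    ((memLp_mul_norm_of_hasCompactSupport hcu' hsupp.deriv 2).restrict (Ioi r))
  simp only [mul_pow] at hCS
  calc r ^ 2 * ‖u r‖ ^ 2 ≤ 2 * ∫ s in Ioi r, (s * ‖u s‖) * (s * ‖deriv u s‖) :=
        sq_mul_norm_sq_le_two_integral_Ioi hu hsupp (hR.trans hr)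
    _ ≤ 2 * (√(∫ s in Ioi r, s ^ 2 * ‖u s‖ ^ 2) *
          √(∫ s in Ioi r, s ^ 2 * ‖deriv u s‖ ^ 2)) := by
        gcongr
    _ ≤ 2 * (√(∫ s in Ioi R, s ^ 2 * ‖u s‖ ^ 2) *
          √(∫ s in Ioi R, s ^ 2 * ‖deriv u s‖ ^ 2)) := by
        gcongr 2 * (√?_ * √?_)
        · exact setIntegral_Ioi_sq_mul_norm_sq_le_of_le hcu hsupp hr
        · exact setIntegral_Ioi_sq_mul_norm_sq_le_of_le hcu' hsupp.deriv hr
    _ = _ := by ring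

end

/-- For `u : ℝ → ℂ` continuously differentiable with compact support and `R > 0`,
`∫_R^∞ |u(r)|⁴ r² dr ≤ 2 R^{-2} ‖r·u'‖_{L²(R,∞)} ‖r·u‖_{L²(R,∞)}³`. -/
theorem stmt7 (u : ℝ → ℂ) (hu : ContDiff ℝ 1 u) (hsupp : HasCompactSupport u)
    (R : ℝ) (hR : 0 < R) :
    (∫ r in Set.Ioi R, ‖u r‖ ^ 4 * r ^ 2) ≤
      2 / R ^ 2 * Real.sqrt (∫ r in Set.Ioi R, r ^ 2 * ‖deriv u r‖ ^ 2) *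
        Real.sqrt (∫ r in Set.Ioi R, r ^ 2 * ‖u r‖ ^ 2) ^ 3 := by
  set A := √(∫ r in Ioi R, r ^ 2 * ‖deriv u r‖ ^ 2)
  set B := √(∫ r in Ioi R, r ^ 2 * ‖u r‖ ^ 2)
  have hB : B ^ 2 = ∫ r in Ioi R, r ^ 2 * ‖u r‖ ^ 2 :=
    Real.sq_sqrt (setIntegral_nonneg measurableSet_Ioi fun r _ => by positivity)
  have hcu := hu.continuous
  have hint_left : Integrable fun r => ‖u r‖ ^ 4 * r ^ 2 :=
    Continuous.integrable_of_hasCompactSupport (by fun_prop)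
      (hsupp.mono fun s hs h => hs (by simp [h]))
  have hint_right : Integrable fun r => r ^ 2 * ‖u r‖ ^ 2 :=
    Continuous.integrable_of_hasCompactSupport (by fun_prop)
      (hsupp.mono fun s hs h => hs (by simp [h]))
  calc ∫ r in Ioi R, ‖u r‖ ^ 4 * r ^ 2
      ≤ ∫ r in Ioi R, 2 * A * B / R ^ 2 * (r ^ 2 * ‖u r‖ ^ 2) := by
        refine setIntegral_mono_on hint_left.integrableOn (hint_right.const_mul _).integrableOn
          measurableSet_Ioi fun r hr => ?_
        calc ‖u r‖ ^ 4 * r ^ 2 = (r ^ 2 * ‖u r‖ ^ 2) * ‖u r‖ ^ 2 := by ring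
          _ ≤ (2 * A * B) * ‖u r‖ ^ 2 := by
              gcongr ?_ * _
              exact sq_mul_norm_sq_le_two_mul_sqrt_mul_sqrt hu hsupp hR.le hr.le
          _ = 2 * A * B / R ^ 2 * (R ^ 2 * ‖u r‖ ^ 2) := by field_simp
          _ ≤ 2 * A * B / R ^ 2 * (r ^ 2 * ‖u r‖ ^ 2) := by gcongr; exact hr.le
    _ = 2 / R ^ 2 * A * B ^ 3 := by rw [integral_const_mul, ← hB]; ring
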